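/- (Braid relation input lemma) For f ∈ ℂ[y₁, y₂, y₃] ⊂ P (Clifford–polynomial superalgebra) with s₁, s₂ the permutation actions swapping (y₁,y₂),(c₁,c₂) and (y₂,y₃),(c₂,c₃) respectively, and σ₂ the odd divided difference in positions 2,3, one has s₁σ₂s₁ f = s₂σ₁s₂ f for all f; i.e. the conjugates of odd divided differences by adjacent transpositions agree. -/

import Mathlib

/-- Generators of the Clifford–polynomial superalgebra `P`: `y`'s, `z`'s and `c`'s. -/
abbrev PGen (n : ℕ) := Fin n ⊕ Fin n ⊕ Fin n

/-- Defining relations of `P`: the `y`'s and `z`'s commute with each other,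
`cᵢ² = 1`, `cᵢcⱼ = −cⱼcᵢ` for `i ≠ j`, `cᵢyⱼ = (−1)^{δᵢⱼ} yⱼcᵢ`,
`cᵢzⱼ = (−1)^{δᵢⱼ} zⱼcᵢ`. -/
inductive PRel (n : ℕ) : FreeAlgebra ℂ (PGen n) → FreeAlgebra ℂ (PGen n) → Prop
  | yy (i j : Fin n) : PRel n
      (FreeAlgebra.ι ℂ (Sum.inl i) * FreeAlgebra.ι ℂ (Sum.inl j))
      (FreeAlgebra.ι ℂ (Sum.inl j) * FreeAlgebra.ι ℂ (Sum.inl i))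
  | zz (i j : Fin n) : PRel n
      (FreeAlgebra.ι ℂ (Sum.inr (Sum.inl i)) * FreeAlgebra.ι ℂ (Sum.inr (Sum.inl j)))
      (FreeAlgebra.ι ℂ (Sum.inr (Sum.inl j)) * FreeAlgebra.ι ℂ (Sum.inr (Sum.inl i)))
  | yz (i j : Fin n) : PRel n
      (FreeAlgebra.ι ℂ (Sum.inl i) * FreeAlgebra.ι ℂ (Sum.inr (Sum.inl j)))
      (FreeAlgebra.ι ℂ (Sum.inr (Sum.inl j)) * FreeAlgebra.ι ℂ (Sum.inl i))
  | csq (i : Fin n) : PRel n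
      (FreeAlgebra.ι ℂ (Sum.inr (Sum.inr i)) * FreeAlgebra.ι ℂ (Sum.inr (Sum.inr i))) 1
  | cc (i j : Fin n) (h : i ≠ j) : PRel n
      (FreeAlgebra.ι ℂ (Sum.inr (Sum.inr i)) * FreeAlgebra.ι ℂ (Sum.inr (Sum.inr j)))
      (-(FreeAlgebra.ι ℂ (Sum.inr (Sum.inr j)) * FreeAlgebra.ι ℂ (Sum.inr (Sum.inr i))))
  | cy_ne (i j : Fin n) (h : i ≠ j) : PRel n
      (FreeAlgebra.ι ℂ (Sum.inr (Sum.inr i)) * FreeAlgebra.ι ℂ (Sum.inl j))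
      (FreeAlgebra.ι ℂ (Sum.inl j) * FreeAlgebra.ι ℂ (Sum.inr (Sum.inr i)))
  | cy_eq (i : Fin n) : PRel n
      (FreeAlgebra.ι ℂ (Sum.inr (Sum.inr i)) * FreeAlgebra.ι ℂ (Sum.inl i))
      (-(FreeAlgebra.ι ℂ (Sum.inl i) * FreeAlgebra.ι ℂ (Sum.inr (Sum.inr i))))
  | cz_ne (i j : Fin n) (h : i ≠ j) : PRel n
      (FreeAlgebra.ι ℂ (Sum.inr (Sum.inr i)) * FreeAlgebra.ι ℂ (Sum.inr (Sum.inl j)))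
      (FreeAlgebra.ι ℂ (Sum.inr (Sum.inl j)) * FreeAlgebra.ι ℂ (Sum.inr (Sum.inr i)))
  | cz_eq (i : Fin n) : PRel n
      (FreeAlgebra.ι ℂ (Sum.inr (Sum.inr i)) * FreeAlgebra.ι ℂ (Sum.inr (Sum.inl i)))
      (-(FreeAlgebra.ι ℂ (Sum.inr (Sum.inl i)) * FreeAlgebra.ι ℂ (Sum.inr (Sum.inr i))))

/-- The Clifford–polynomial superalgebra `P`. -/
abbrev PAlg (n : ℕ) := RingQuot (PRel n)

/-- The even generator `yᵢ`. -/
noncomputable def Py (n : ℕ) (i : Fin n) : PAlg n :=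
  RingQuot.mkAlgHom ℂ (PRel n) (FreeAlgebra.ι ℂ (Sum.inl i))

/-- The even generator `zᵢ`. -/
noncomputable def Pz (n : ℕ) (i : Fin n) : PAlg n :=
  RingQuot.mkAlgHom ℂ (PRel n) (FreeAlgebra.ι ℂ (Sum.inr (Sum.inl i)))

/-- The odd generator `cᵢ`. -/
noncomputable def Pc (n : ℕ) (i : Fin n) : PAlg n :=
  RingQuot.mkAlgHom ℂ (PRel n) (FreeAlgebra.ι ℂ (Sum.inr (Sum.inr i)))

/-- The embedding of `ℂ[y₁,…,yₙ]` into `P`, `yᵢ ↦ yᵢ` (defined on monomials; it is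
the canonical algebra map onto the commutative subalgebra generated by the `y`'s). -/
noncomputable def ιP (n : ℕ) : MvPolynomial (Fin n) ℂ → PAlg n := fun f =>
  (AddMonoidAlgebra.coeff f).sum fun m c => c • ((List.finRange n).map fun i => Py n i ^ m i).prod

/-- `s_k`: the transposition of the variables `y_a`, `y_b` on polynomials. -/
noncomputable def skPoly (n : ℕ) (a b : Fin n) :
    MvPolynomial (Fin n) ℂ →ₐ[ℂ] MvPolynomial (Fin n) ℂ :=
  MvPolynomial.rename (Equiv.swap a b)

/-- `s̄_k`: sends `y_a ↦ −y_b`, `y_b ↦ −y_a`, fixing the other variables. -/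
noncomputable def sbarPoly (n : ℕ) (a b : Fin n) :
    MvPolynomial (Fin n) ℂ →ₐ[ℂ] MvPolynomial (Fin n) ℂ :=
  MvPolynomial.aeval fun j =>
    if j = a then -MvPolynomial.X b else if j = b then -MvPolynomial.X a else MvPolynomial.X j

/-- `σ` is an odd divided difference operator in positions `a`, `b`:
`σ f = (s f − f)/(y_a − y_b) + c_a c_b (s̄ f − f)/(y_a + y_b)` computed inside `P`. -/
def IsOddDD (n : ℕ) (a b : Fin n) (σ : MvPolynomial (Fin n) ℂ →ₗ[ℂ] PAlg n) : Prop :=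
  ∀ (f g h : MvPolynomial (Fin n) ℂ),
    skPoly n a b f - f = (MvPolynomial.X a - MvPolynomial.X b) * g →
    sbarPoly n a b f - f = (MvPolynomial.X a + MvPolynomial.X b) * h →
    σ f = ιP n g + Pc n a * Pc n b * ιP n h
open MvPolynomial in
/-- Expand in the variable `a`. -/
noncomputable def expandVar (n : ℕ) (a : Fin n) :
    MvPolynomial (Fin n) ℂ →ₐ[ℂ] Polynomial (MvPolynomial (Fin n) ℂ) :=
  aeval (fun j => if j = a then Polynomial.X else Polynomial.C (X j))

open MvPolynomial in
lemma eval_expandVar (n : ℕ) (a : Fin n) (r : MvPolynomial (Fin n) ℂ)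
    (f : MvPolynomial (Fin n) ℂ) :
    Polynomial.eval r (expandVar n a f)
      = aeval (fun j => if j = a then r else X j) f := by
  induction f using MvPolynomial.induction_on with
  | C c => simp [expandVar, algebraMap_eq, Polynomial.algebraMap_eq]
  | add p q hp hq => simp [map_add, hp, hq]
  | mul_X p i hp =>
      have hX : expandVar n a (X i)
          = if i = a then Polynomial.X else Polynomial.C (X i) := by
        simp [expandVar]
      rw [map_mul, map_mul, Polynomial.eval_mul, hp, hX, aeval_X]
      split_ifs with h <;> simp [h]

open MvPolynomial in
lemma aeval_if_self (n : ℕ) (a : Fin n) (f : MvPolynomial (Fin n) ℂ) :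
    aeval (fun j => if j = a then X a else (X j : MvPolynomial (Fin n) ℂ)) f = f := by
  have h : (fun j => if j = a then X a else (X j : MvPolynomial (Fin n) ℂ)) = X := by
    funext j
    split_ifs with h
    · subst h; rfl
    · rfl
  rw [h, aeval_X_left_apply]

open MvPolynomial in
lemma sub_dvd_subst (n : ℕ) (a : Fin n) (s : MvPolynomial (Fin n) ℂ)
    (f : MvPolynomial (Fin n) ℂ) :
    (X a - s) ∣ (f - aeval (fun j => if j = a then s else X j) f) := by
  have h := Polynomial.sub_dvd_eval_sub (X a) s (expandVar n a f)
  rwa [eval_expandVar, eval_expandVar, aeval_if_self] at h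

open MvPolynomial in
lemma dvd_sk (n : ℕ) (a b : Fin n) (f : MvPolynomial (Fin n) ℂ) :
    (X a - X b) ∣ (skPoly n a b f - f) := by
  set φ : MvPolynomial (Fin n) ℂ →ₐ[ℂ] MvPolynomial (Fin n) ℂ :=
    aeval (fun j => if j = a then X b else X j) with hφdef
  have key : φ.comp (skPoly n a b) = φ := by
    apply algHom_ext
    intro j
    by_cases hja : j = a
    · subst hja
      by_cases hab : j = b
      · subst hab; simp [hφdef, skPoly]
      · simp [hφdef, skPoly, Equiv.swap_apply_left, hab]
    · by_cases hjb : j = b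
      · subst hjb
        simp [hφdef, skPoly, Equiv.swap_apply_right, hja]
      · simp [hφdef, skPoly, Equiv.swap_apply_of_ne_of_ne hja hjb, hja, hjb]
  have hφ : φ (skPoly n a b f) = φ f := AlgHom.congr_fun key f
  have h1 := sub_dvd_subst n a (X b) (skPoly n a b f)
  have h2 := sub_dvd_subst n a (X b) f
  have hsplit : skPoly n a b f - f
      = (skPoly n a b f - φ (skPoly n a b f)) - (f - φ f) := by
    rw [hφ]; ring
  rw [hsplit]
  exact dvd_sub h1 h2

open MvPolynomial in
lemma dvd_sbar (n : ℕ) (a b : Fin n) (hab : a ≠ b) (f : MvPolynomial (Fin n) ℂ) :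
    (X a + X b) ∣ (sbarPoly n a b f - f) := by
  set φ : MvPolynomial (Fin n) ℂ →ₐ[ℂ] MvPolynomial (Fin n) ℂ :=
    aeval (fun j => if j = a then -X b else X j) with hφdef
  have key : φ.comp (sbarPoly n a b) = φ := by
    apply algHom_ext
    intro j
    by_cases hja : j = a
    · subst hja
      simp [hφdef, sbarPoly, Ne.symm hab]
    · by_cases hjb : j = b
      · subst hjb
        simp [hφdef, sbarPoly, hja]
      · simp [hφdef, sbarPoly, hja, hjb]
  have hφ : φ (sbarPoly n a b f) = φ f := AlgHom.congr_fun key f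
  have h1 := sub_dvd_subst n a (-X b) (sbarPoly n a b f)
  have h2 := sub_dvd_subst n a (-X b) f
  rw [sub_neg_eq_add] at h1 h2
  have hsplit : sbarPoly n a b f - f
      = (sbarPoly n a b f - φ (sbarPoly n a b f)) - (f - φ f) := by
    rw [hφ]; ring
  rw [hsplit]
  exact dvd_sub h1 h2
lemma Py_comm (n : ℕ) (i j : Fin n) : Commute (Py n i) (Py n j) := by
  unfold Py
  rw [Commute, SemiconjBy, ← map_mul, ← map_mul]
  exact RingQuot.mkAlgHom_rel ℂ (PRel.yy i j)

open MvPolynomial in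
lemma listprod_perm (n : ℕ) (e : Equiv.Perm (Fin n)) (m : Fin n →₀ ℕ) :
    ((List.finRange n).map fun i => Py n (e i) ^ m i).prod
      = ((List.finRange n).map fun i => Py n i ^ (Finsupp.mapDomain e m) i).prod := by
  set F : Fin n → PAlg n := fun i => Py n i ^ (Finsupp.mapDomain e m) i with hF
  have h1 : ((List.finRange n).map fun i => Py n (e i) ^ m i)
      = ((List.finRange n).map ⇑e).map F := by
    rw [List.map_map]
    apply List.map_congr_left
    intro i _
    simp only [Function.comp_apply, hF, Finsupp.mapDomain_apply e.injective]
  rw [h1]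
  apply List.Perm.prod_eq'
  · exact (e.map_finRange_perm).map F
  · haveI : Std.Refl (Commute : PAlg n → PAlg n → Prop) := ⟨Commute.refl⟩
    apply List.pairwise_of_reflexive_of_forall_ne
    intro x hx y hy _
    rcases List.mem_map.mp hx with ⟨i, _, rfl⟩
    rcases List.mem_map.mp hy with ⟨j, _, rfl⟩
    exact ((Py_comm n i j).pow_pow _ _)

open MvPolynomial in
lemma map_iP (n : ℕ) (S : PAlg n →ₐ[ℂ] PAlg n) (e : Equiv.Perm (Fin n))
    (hS : ∀ j, S (Py n j) = Py n (e j)) (g : MvPolynomial (Fin n) ℂ) :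
    S (ιP n g) = ιP n (rename (⇑e) g) := by
  induction g using MvPolynomial.induction_on' with
  | add p q hp hq =>
      have hadd : ∀ (u : MvPolynomial (Fin n) ℂ) (v : MvPolynomial (Fin n) ℂ),
          ιP n (u + v) = ιP n u + ιP n v := by
        intro u v
        unfold ιP
        apply Finsupp.sum_add_index'
        · intro m; simp
        · intro m c1 c2; rw [add_smul]
      rw [hadd, map_add, hp, hq, map_add, hadd]
  | monomial u c =>
      have hmono : ∀ (v : Fin n →₀ ℕ) (d : ℂ),
          ιP n (monomial v d) = d • ((List.finRange n).map fun i => Py n i ^ v i).prod := by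
        intro v d
        unfold ιP
        rw [sum_monomial_eq]
        simp
      rw [hmono, rename_monomial, hmono, map_smul, map_list_prod]
      congr 1
      rw [List.map_map]
      have h2 : ((List.finRange n).map (⇑S ∘ fun i => Py n i ^ u i))
          = ((List.finRange n).map fun i => Py n (e i) ^ u i) := by
        apply List.map_congr_left
        intro i _
        simp [map_pow, hS]
      rw [h2, listprod_perm]

open MvPolynomial in
lemma sk_invol (n : ℕ) (a b : Fin n) (f : MvPolynomial (Fin n) ℂ) :
    skPoly n a b (skPoly n a b f) = f := by
  simp only [skPoly, rename_rename]
  have h : (⇑(Equiv.swap a b) ∘ ⇑(Equiv.swap a b)) = id := by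
    funext j; simp [Equiv.swap_apply_self]
  rw [h, rename_id, AlgHom.id_apply]

open MvPolynomial in
lemma braid_sk (f : MvPolynomial (Fin 3) ℂ) :
    skPoly 3 0 1 (skPoly 3 1 2 (skPoly 3 0 1 f))
      = skPoly 3 1 2 (skPoly 3 0 1 (skPoly 3 1 2 f)) := by
  simp only [skPoly, rename_rename]
  have hfun : (⇑(Equiv.swap (0:Fin 3) 1) ∘ ⇑(Equiv.swap (1:Fin 3) 2) ∘ ⇑(Equiv.swap (0:Fin 3) 1))
      = (⇑(Equiv.swap (1:Fin 3) 2) ∘ ⇑(Equiv.swap (0:Fin 3) 1) ∘ ⇑(Equiv.swap (1:Fin 3) 2)) := by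
    funext j; fin_cases j <;> decide
  rw [hfun]

open MvPolynomial in
lemma braid_sbar (f : MvPolynomial (Fin 3) ℂ) :
    skPoly 3 0 1 (sbarPoly 3 1 2 (skPoly 3 0 1 f))
      = skPoly 3 1 2 (sbarPoly 3 0 1 (skPoly 3 1 2 f)) := by
  have key : (skPoly 3 0 1).comp ((sbarPoly 3 1 2).comp (skPoly 3 0 1))
      = (skPoly 3 1 2).comp ((sbarPoly 3 0 1).comp (skPoly 3 1 2)) := by
    apply algHom_ext
    intro j
    fin_cases j <;>
      simp [skPoly, sbarPoly, Equiv.swap_apply_def]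
  exact AlgHom.congr_fun key f

open MvPolynomial in
lemma X_sub_ne (a b : Fin 3) (h : a ≠ b) : (X a - X b : MvPolynomial (Fin 3) ℂ) ≠ 0 :=
  sub_ne_zero.mpr (fun he => h (X_injective he))

open MvPolynomial in
lemma X_add_ne (a b : Fin 3) (h : a ≠ b) : (X a + X b : MvPolynomial (Fin 3) ℂ) ≠ 0 := by
  intro he
  have hc := congrArg (coeff (Finsupp.single a 1)) he
  rw [coeff_add, coeff_zero, coeff_X, coeff_X'] at hc
  rw [if_neg (fun hs => h ((Finsupp.single_left_inj one_ne_zero).mp hs).symm)] at hc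
  norm_num at hc
open MvPolynomial in
lemma skPoly_X (n : ℕ) (a b j : Fin n) :
    skPoly n a b (X j) = X (Equiv.swap a b j) := by
  simp [skPoly]

open MvPolynomial in
lemma skPoly_apply (n : ℕ) (a b : Fin n) (f : MvPolynomial (Fin n) ℂ) :
    skPoly n a b f = rename (⇑(Equiv.swap a b)) f := rfl

open MvPolynomial in
theorem braid_relation_input'
    (S1 S2 : PAlg 3 →ₐ[ℂ] PAlg 3)
    (hS1y : ∀ j : Fin 3, S1 (Py 3 j) = Py 3 (Equiv.swap 0 1 j))
    (hS1c : ∀ j : Fin 3, S1 (Pc 3 j) = Pc 3 (Equiv.swap 0 1 j))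
    (hS2y : ∀ j : Fin 3, S2 (Py 3 j) = Py 3 (Equiv.swap 1 2 j))
    (hS2c : ∀ j : Fin 3, S2 (Pc 3 j) = Pc 3 (Equiv.swap 1 2 j))
    (σ1 σ2 : MvPolynomial (Fin 3) ℂ →ₗ[ℂ] PAlg 3)
    (hσ1 : IsOddDD 3 0 1 σ1) (hσ2 : IsOddDD 3 1 2 σ2) :
    ∀ f : MvPolynomial (Fin 3) ℂ,
      S1 (σ2 (skPoly 3 0 1 f)) = S2 (σ1 (skPoly 3 1 2 f)) := by
  intro f
  obtain ⟨g2, hg2⟩ := dvd_sk 3 1 2 (skPoly 3 0 1 f)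
  obtain ⟨h2, hh2⟩ := dvd_sbar 3 1 2 (by decide) (skPoly 3 0 1 f)
  obtain ⟨g1, hg1⟩ := dvd_sk 3 0 1 (skPoly 3 1 2 f)
  obtain ⟨h1, hh1⟩ := dvd_sbar 3 0 1 (by decide) (skPoly 3 1 2 f)
  rw [hσ2 _ g2 h2 hg2 hh2, hσ1 _ g1 h1 hg1 hh1]
  have hswap1 : Equiv.swap (0 : Fin 3) 1 1 = 0 := by decide
  have hswap2 : Equiv.swap (0 : Fin 3) 1 2 = 2 := by decide
  have hswap3 : Equiv.swap (1 : Fin 3) 2 0 = 0 := by decide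
  have hswap4 : Equiv.swap (1 : Fin 3) 2 1 = 2 := by decide
  have hgeq : skPoly 3 0 1 g2 = skPoly 3 1 2 g1 := by
    have A := congrArg (skPoly 3 0 1) hg2
    have B := congrArg (skPoly 3 1 2) hg1
    rw [map_sub, map_mul, map_sub, skPoly_X, skPoly_X, sk_invol, braid_sk] at A
    rw [map_sub, map_mul, map_sub, skPoly_X, skPoly_X, sk_invol] at B
    rw [hswap1, hswap2] at A
    rw [hswap3, hswap4] at B
    exact mul_left_cancel₀ (X_sub_ne 0 2 (by decide)) (A.symm.trans B)
  have hheq : skPoly 3 0 1 h2 = skPoly 3 1 2 h1 := by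
    have A := congrArg (skPoly 3 0 1) hh2
    have B := congrArg (skPoly 3 1 2) hh1
    rw [map_sub, map_mul, map_add, skPoly_X, skPoly_X, sk_invol, braid_sbar] at A
    rw [map_sub, map_mul, map_add, skPoly_X, skPoly_X, sk_invol] at B
    rw [hswap1, hswap2] at A
    rw [hswap3, hswap4] at B
    exact mul_left_cancel₀ (X_add_ne 0 2 (by decide)) (A.symm.trans B)
  rw [skPoly_apply, skPoly_apply] at hgeq hheq
  rw [map_add, map_add, map_mul, map_mul, map_mul, map_mul, hS1c, hS1c, hS2c, hS2c,
    map_iP 3 S1 (Equiv.swap 0 1) hS1y, map_iP 3 S1 (Equiv.swap 0 1) hS1y,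
    map_iP 3 S2 (Equiv.swap 1 2) hS2y, map_iP 3 S2 (Equiv.swap 1 2) hS2y,
    hswap1, hswap2, hswap3, hswap4, hgeq, hheq]

/-- Braid relation input lemma: in the Clifford–polynomial superalgebra
on three strands, with `S₁, S₂` the algebra automorphisms permuting the `y`'s, `z`'s and
`c`'s by the transpositions `(1 2)`, `(2 3)` and `σ₁, σ₂` the odd divided differences,
one has `s₁ σ₂ s₁ f = s₂ σ₁ s₂ f` for every polynomial `f ∈ ℂ[y₁,y₂,y₃]`. -/
theorem braid_relation_input
    (S1 S2 : PAlg 3 →ₐ[ℂ] PAlg 3)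
    (hS1y : ∀ j : Fin 3, S1 (Py 3 j) = Py 3 (Equiv.swap 0 1 j))
    (hS1z : ∀ j : Fin 3, S1 (Pz 3 j) = Pz 3 (Equiv.swap 0 1 j))
    (hS1c : ∀ j : Fin 3, S1 (Pc 3 j) = Pc 3 (Equiv.swap 0 1 j))
    (hS2y : ∀ j : Fin 3, S2 (Py 3 j) = Py 3 (Equiv.swap 1 2 j))
    (hS2z : ∀ j : Fin 3, S2 (Pz 3 j) = Pz 3 (Equiv.swap 1 2 j))
    (hS2c : ∀ j : Fin 3, S2 (Pc 3 j) = Pc 3 (Equiv.swap 1 2 j))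
    (σ1 σ2 : MvPolynomial (Fin 3) ℂ →ₗ[ℂ] PAlg 3)
    (hσ1 : IsOddDD 3 0 1 σ1) (hσ2 : IsOddDD 3 1 2 σ2) :
    ∀ f : MvPolynomial (Fin 3) ℂ,
      S1 (σ2 (skPoly 3 0 1 f)) = S2 (σ1 (skPoly 3 1 2 f)) := by
  exact braid_relation_input' S1 S2 hS1y hS1c hS2y hS2c σ1 σ2 hσ1 hσ2
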